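/- Minimality of algorithmically reached models: for any program P, if there is an algorithmic step sequence from ⊥ to Δ under P and Δ is a model of P (T_P(Δ) = {Δ}), then Δ is a minimal model: for every model M of P with M ≤ Δ, one has M = Δ. -/

import Mathlib

open scoped Classical

namespace FCLP

/-! ### Terms -/

/-- Ground (Herbrand) terms: uninterpreted function symbols applied to ground terms. -/
inductive GTerm : Type where
  | func : ℕ → List GTerm → GTerm

/-- Terms possibly containing variables. -/
inductive VTerm : Type where
  | var : ℕ → VTerm
  | func : ℕ → List VTerm → VTerm

/-- A substitution is a total map from variables to ground terms. -/
abbrev Subst := ℕ → GTerm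

mutual
  /-- Applying a substitution to a term. -/
  def VTerm.subst (σ : Subst) : VTerm → GTerm
    | .var x => σ x
    | .func f args => .func f (VTerm.substList σ args)
  def VTerm.substList (σ : Subst) : List VTerm → List GTerm
    | [] => []
    | t :: ts => VTerm.subst σ t :: VTerm.substList σ ts
end

/-- The variable `x` occurs in the term. -/
inductive VTerm.HasVar : VTerm → ℕ → Prop where
  | var (x : ℕ) : VTerm.HasVar (.var x) x
  | func {f : ℕ} {args : List VTerm} {t : VTerm} {x : ℕ} :
      t ∈ args → VTerm.HasVar t x → VTerm.HasVar (.func f args) x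

/-! ### Attributes, facts, rules, programs -/

/-- An attribute `p(t₁,...,tₙ)`: a predicate applied to ground terms. -/
structure Attr where
  pred : ℕ
  args : List GTerm

/-- A fact `p(t̄) is v`. -/
structure Fact where
  attr : Attr
  value : GTerm

/-- A premise `p(t̄) is v`, possibly containing variables. -/
structure VAtom where
  pred : ℕ
  args : List VTerm
  value : VTerm

def VAtom.subst (σ : Subst) (A : VAtom) : Fact :=
  ⟨⟨A.pred, A.args.map (VTerm.subst σ)⟩, A.value.subst σ⟩

def VAtom.HasVar (A : VAtom) (x : ℕ) : Prop :=
  (∃ t ∈ A.args, t.HasVar x) ∨ A.value.HasVar x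

/-- A rule head: open `p(t̄) is? v` or closed `p(t̄) is {v₁,...,vₘ}`. -/
inductive Head : Type where
  | opn : ℕ → List VTerm → VTerm → Head
  | closed : ℕ → List VTerm → List VTerm → Head

def Head.HasVar : Head → ℕ → Prop
  | .opn _ args v, x => (∃ t ∈ args, t.HasVar x) ∨ v.HasVar x
  | .closed _ args vs, x => (∃ t ∈ args, t.HasVar x) ∨ ∃ v ∈ vs, v.HasVar x

/-- The ground attribute of a rule head under a substitution. -/
def Head.groundAttr (σ : Subst) : Head → Attr
  | .opn p args _ => ⟨p, args.map (VTerm.subst σ)⟩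
  | .closed p args _ => ⟨p, args.map (VTerm.subst σ)⟩

/-- A rule `H ← F` with a finite collection of premises. -/
structure Rule where
  head : Head
  prems : List VAtom

/-- Wellformedness: closed heads offer at least one value, and every
variable in the head occurs in a premise. -/
def Rule.WF (r : Rule) : Prop :=
  (∀ x, r.head.HasVar x → ∃ A ∈ r.prems, A.HasVar x) ∧
  (∀ p args vs, r.head = .closed p args vs → vs ≠ [])

/-- A program is a set of rules. -/
abbrev Program := Set Rule

/-- A program is a *finite* set of *wellformed* rules. -/
def Program.WFP (P : Program) : Prop := P.Finite ∧ ∀ r ∈ P, r.WF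

/-! ### Fact-set semantics -/

/-- A set of facts is consistent when each attribute has at most one value. -/
def Consistent (D : Set Fact) : Prop :=
  ∀ f ∈ D, ∀ g ∈ D, f.attr = g.attr → f = g

/-- `σ` satisfies the premises `F` in the fact-set database `D`. -/
def satF (σ : Subst) (F : List VAtom) (D : Set Fact) : Prop :=
  ∀ A ∈ F, A.subst σ ∈ D

/-- Fact-set evolution `D →_P S`. -/
inductive Evolve (P : Program) : Set Fact → Set (Set Fact) → Prop where
  | triv (D : Set Fact) : Evolve P D {D}
  | closed {D : Set Fact} {r : Rule} {p : ℕ} {args vs : List VTerm} {σ : Subst} :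
      r ∈ P → r.head = .closed p args vs → satF σ r.prems D →
      Evolve P D
        { E | ∃ v ∈ vs,
            E = insert (⟨⟨p, args.map (VTerm.subst σ)⟩, VTerm.subst σ v⟩ : Fact) D ∧
            Consistent E }
  | opn {D : Set Fact} {r : Rule} {p : ℕ} {args : List VTerm} {v : VTerm} {σ : Subst} :
      r ∈ P → r.head = .opn p args v → satF σ r.prems D →
      Evolve P D
        ({D} ∪ { E | E = insert (⟨⟨p, args.map (VTerm.subst σ)⟩, VTerm.subst σ v⟩ : Fact) D ∧
                     Consistent E })

/-- `P` allows `D` to step to `D'`. -/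
def Step (P : Program) (D D' : Set Fact) : Prop := ∃ S, Evolve P D S ∧ D' ∈ S

/-- A database is saturated when its only evolution is the singleton of itself. -/
def Saturated (P : Program) (D : Set Fact) : Prop := ∀ S, Evolve P D S → S = {D}

/-- A solution: a saturated database reachable from `∅` by a (finite) step sequence. -/
def Solution (P : Program) (D : Set Fact) : Prop :=
  Relation.ReflTransGen (Step P) ∅ D ∧ Saturated P D

/-! ### Constraints and constraint databases -/

/-- A constraint: `just t` or `noneOf X`. -/
inductive Constraint : Type where
  | just : GTerm → Constraint
  | noneOf : Set GTerm → Constraint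

/-- The order on constraints. -/
def Constraint.le : Constraint → Constraint → Prop
  | .noneOf X, .noneOf Y => X ⊆ Y
  | .noneOf X, .just t => t ∉ X
  | .just t, .just t' => t = t'
  | .just _, .noneOf _ => False

instance : LE Constraint := ⟨Constraint.le⟩

/-- Least upper bound of a (compatible) set of constraints: if some `just t` is present
it is the lub; otherwise it is `noneOf` of the union. -/
noncomputable def Constraint.lub (C : Set Constraint) : Constraint :=
  if h : ∃ t, Constraint.just t ∈ C then .just h.choose
  else .noneOf (⋃₀ { X | Constraint.noneOf X ∈ C })

/-- A constraint database: a map from ground attributes to constraints,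
ordered pointwise (via the `Pi` order). -/
abbrev CDB := Attr → Constraint

/-- The least constraint database: every attribute maps to `noneOf ∅`. -/
def cdbBot : CDB := fun _ => .noneOf ∅

/-- Pointwise least upper bound of a (compatible) set of constraint databases. -/
noncomputable def CDB.lub (S : Set CDB) : CDB :=
  fun a => Constraint.lub ((fun Δ => Δ a) '' S)

/-- A subset of a poset is compatible when it has an upper bound. -/
def Compatible {α : Type*} [LE α] (X : Set α) : Prop := ∃ y, ∀ x ∈ X, x ≤ y

/-- Binary compatibility. -/
def Compat {α : Type*} [LE α] (x y : α) : Prop := Compatible ({x, y} : Set α)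

/-- A choice set: a pairwise-incompatible set of constraint databases. -/
def IsChoiceSet (𝒞 : Set CDB) : Prop :=
  ∀ D ∈ 𝒞, ∀ E ∈ 𝒞, Compat D E → D = E

/-- The order on choice sets. -/
def ChoiceLE (𝒞₁ 𝒞₂ : Set CDB) : Prop :=
  ∀ D₂ ∈ 𝒞₂, ∃ D₁ ∈ 𝒞₁, D₁ ≤ D₂

/-- Least upper bound of an indexed family of choice sets:
`⋁ᵢ 𝒞ᵢ = { ⋁ Im(f) : f ∈ ∏ᵢ 𝒞ᵢ, Im(f) compatible }`. -/
noncomputable def ChoiceJoin {I : Type*} (𝒞 : I → Set CDB) : Set CDB :=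
  { E | ∃ f : I → CDB, (∀ i, f i ∈ 𝒞 i) ∧ Compatible (Set.range f) ∧
        E = CDB.lub (Set.range f) }

/-- Least upper bound of a set of choice sets. -/
noncomputable def ChoiceSJoin (S : Set (Set CDB)) : Set CDB :=
  ChoiceJoin (fun C : S => (C : Set CDB))

/-- Greatest lower bound of a set of choice sets:
`⋀ X = ⋁ {𝒞 : ∀ x ∈ X, 𝒞 ≤ x}` (join over choice-set lower bounds). -/
noncomputable def ChoiceMeet (S : Set (Set CDB)) : Set CDB :=
  ChoiceSJoin { C | IsChoiceSet C ∧ ∀ X ∈ S, ChoiceLE C X }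

/-! ### Immediate consequence -/

/-- `σ` satisfies `F` in the constraint database `Δ`. -/
def satC (σ : Subst) (F : List VAtom) (Δ : CDB) : Prop :=
  ∀ A ∈ F, Constraint.just (A.value.subst σ) ≤ Δ ⟨A.pred, A.args.map (VTerm.subst σ)⟩

/-- The constraint database mapping `a` to `c` and every other attribute to `noneOf ∅`. -/
noncomputable def unitCDB (a : Attr) (c : Constraint) : CDB :=
  fun a' => if a' = a then c else .noneOf ∅

/-- The choice set `⟨σH⟩` determined by a ground rule head. -/
noncomputable def headChoice (σ : Subst) : Head → Set CDB
  | .opn p args v =>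
      { unitCDB ⟨p, args.map (VTerm.subst σ)⟩ (.just (v.subst σ)),
        unitCDB ⟨p, args.map (VTerm.subst σ)⟩ (.noneOf {v.subst σ}) }
  | .closed p args vs =>
      { Δ | ∃ v ∈ vs, Δ = unitCDB ⟨p, args.map (VTerm.subst σ)⟩ (.just (v.subst σ)) }

/-- The immediate consequence operator
`T_P(Δ) = {Δ} ∨ ⋁{ ⟨σH⟩ : (H ← F) ∈ P, σ satisfies F in Δ }`. -/
noncomputable def TP (P : Program) (Δ : CDB) : Set CDB :=
  ChoiceSJoin
    (insert {Δ} { C | ∃ r ∈ P, ∃ σ : Subst, satC σ r.prems Δ ∧ C = headChoice σ r.head })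

/-- The attribute-specific immediate consequence operator `T_{P[a]}`. -/
noncomputable def TPa (P : Program) (a : Attr) (Δ : CDB) : Set CDB :=
  ChoiceSJoin
    { C | ∃ r ∈ P, ∃ σ : Subst, satC σ r.prems Δ ∧ r.head.groundAttr σ = a ∧
          C = headChoice σ r.head }

/-- The lifted immediate consequence operator `T_P*(𝒞) = ⋃_{Δ ∈ 𝒞} T_P(Δ)`. -/
noncomputable def TPs (P : Program) (𝒞 : Set CDB) : Set CDB :=
  { E | ∃ Δ ∈ 𝒞, E ∈ TP P Δ }

/-- The least fixed point of `T_P*`, defined à la Knaster–Tarski as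
`⋀ {𝒞 : T_P*(𝒞) ≤ 𝒞}`. -/
noncomputable def lfpTPs (P : Program) : Set CDB :=
  ChoiceMeet { C | IsChoiceSet C ∧ ChoiceLE (TPs P C) C }

/-! ### Positive and finite constraint databases, promotion and erasure -/

/-- A constraint database is positive when `noneOf X` only occurs with `X = ∅`. -/
def CDBPositive (Δ : CDB) : Prop := ∀ a X, Δ a = .noneOf X → X = ∅

/-- A constraint database is finite. -/
def CDBFinite (Δ : CDB) : Prop :=
  { a | Δ a ≠ .noneOf ∅ }.Finite ∧ ∀ a X, Δ a = .noneOf X → X.Finite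

/-- Promotion of a (consistent) fact set to a constraint database. -/
noncomputable def promote (D : Set Fact) : CDB :=
  fun a => if h : ∃ v, (⟨a, v⟩ : Fact) ∈ D then .just h.choose else .noneOf ∅

/-- Erasure of a constraint database to a fact set. -/
def eraseCDB (Δ : CDB) : Set Fact := { f | Δ f.attr = .just f.value }

/-! ### The abstract algorithm -/

/-- `P` allows `Δ` to take an algorithmic step to any `Δ' ∈ {Δ} ∨ T_{P[a]}(Δ)`
for some attribute `a`, provided `T_P(Δ) ≠ ∅`. -/
noncomputable def AlgStep (P : Program) (Δ Δ' : CDB) : Prop :=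
  TP P Δ ≠ ∅ ∧ ∃ a : Attr, Δ' ∈ ChoiceSJoin {({Δ} : Set CDB), TPa P a Δ}

/-! ### Datalog -/

/-- A datalog atom, possibly with variables. -/
structure DAtom where
  pred : ℕ
  args : List VTerm

/-- A ground datalog atom. -/
structure GAtom where
  pred : ℕ
  args : List GTerm

def DAtom.subst (σ : Subst) (A : DAtom) : GAtom := ⟨A.pred, A.args.map (VTerm.subst σ)⟩

/-- A datalog rule `p(t̄) ← p₁(t̄₁), ..., pₙ(t̄ₙ)`. -/
structure DRule where
  head : DAtom
  prems : List DAtom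

/-- Every variable of the head appears in a premise. -/
def DRule.WF (r : DRule) : Prop :=
  ∀ x, (∃ t ∈ r.head.args, t.HasVar x) → ∃ A ∈ r.prems, ∃ t ∈ A.args, t.HasVar x

/-- The datalog immediate consequence operator. -/
def dImmCons (P : Set DRule) (X : Set GAtom) : Set GAtom :=
  { g | ∃ r ∈ P, ∃ σ : Subst, (∀ A ∈ r.prems, A.subst σ ∈ X) ∧ g = r.head.subst σ }

/-- The least model of a datalog program: the least fixed point of `dImmCons`. -/
def dModel (P : Set DRule) : Set GAtom := ⋂₀ { X | dImmCons P X ⊆ X }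

/-- Translation of a datalog program to a finite-choice logic program, using the
constant with (fresh) function symbol `u` as the value `unit`. -/
def trDatalog (u : ℕ) (P : Set DRule) : Program :=
  { r | ∃ dr ∈ P,
      r = ⟨Head.closed dr.head.pred dr.head.args [VTerm.func u []],
           dr.prems.map (fun A => ⟨A.pred, A.args, VTerm.func u []⟩)⟩ }

/-! ### Answer set programming -/

/-- A ground ASP rule `p ← p₁,...,pₙ, ¬q₁,...,¬qₘ` over propositional atoms. -/
structure ASPRule where
  head : ℕ
  pos : List ℕ
  neg : List ℕ

/-- One step of the immediate consequence operator of the reduct `P^X`. -/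
def reductCons (P : Set ASPRule) (X : Set ℕ) (Y : Set ℕ) : Set ℕ :=
  { p | ∃ r ∈ P, r.head = p ∧ (∀ q ∈ r.pos, q ∈ Y) ∧ (∀ q ∈ r.neg, q ∉ X) }

/-- The least model of the reduct `P^X`. -/
def reductModel (P : Set ASPRule) (X : Set ℕ) : Set ℕ :=
  ⋂₀ { Y | reductCons P X Y ⊆ Y }

/-- `X` is a stable model of `P` when the least model of the reduct `P^X` equals `X`. -/
def StableModel (P : Set ASPRule) (X : Set ℕ) : Prop := reductModel P X = X

/-- The fresh constant `tt` (as a ground term). -/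
def ttT : GTerm := .func 0 []
/-- The fresh constant `ff` (as a ground term). -/
def ffT : GTerm := .func 1 []
/-- The constant `tt` as a (closed) term of the rule language. -/
def ttV : VTerm := .func 0 []
/-- The constant `ff` as a (closed) term of the rule language. -/
def ffV : VTerm := .func 1 []

/-- The premise `p is tt`. -/
def posPrem (p : ℕ) : VAtom := ⟨p, [], ttV⟩
/-- The premise `q is ff`. -/
def negPrem (q : ℕ) : VAtom := ⟨q, [], ffV⟩

/-- Translation of an ASP program to a finite-choice logic program: each rule
`p ← p₁,...,pₙ, ¬q₁,...,¬qₘ` becomes `m` open rules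
`qⱼ is? ff ← p₁ is tt,...,pₙ is tt, q₁ is ff,...,q_{j-1} is ff` and one closed rule
`p is {tt} ← p₁ is tt,...,pₙ is tt, q₁ is ff,...,qₘ is ff`. -/
def trASP (P : Set ASPRule) : Program :=
  { r | ∃ ar ∈ P,
      (∃ j : Fin ar.neg.length,
        r = ⟨Head.opn (ar.neg.get j) [] ffV,
             ar.pos.map posPrem ++ (ar.neg.take j.val).map negPrem⟩) ∨
      r = ⟨Head.closed ar.head [] [ttV],
           ar.pos.map posPrem ++ ar.neg.map negPrem⟩ }

/-!
Let `M ≤ Δ` be a model. Every database on the step sequence stays below `M`: a step from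
`Δᵢ ≤ M` joins `Δᵢ` with one choice of `⟨σH⟩` for each rule instance satisfied in `Δᵢ`, hence
in `M`. As `M` is a model, some choice of the same `⟨σH⟩` lies below `M ≤ Δ`, and the choice
the step took lies below `Δ` as well; the choices of a choice set are pairwise incompatible,
so the two coincide. Hence `Δ ≤ M`.
-/

namespace Constraint

theorem eq_just_of_just_le {t : GTerm} : ∀ {c : Constraint}, just t ≤ c → c = just t
  | .just _, h => congrArg just (Eq.symm h)
  | .noneOf _, h => (h : False).elim

theorem noneOf_empty_le : ∀ c : Constraint, noneOf ∅ ≤ c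
  | .just t => Set.notMem_empty t
  | .noneOf X => Set.empty_subset X

/-- Only a local instance, so that `≤` on constraint databases outside the section below still
elaborates through the plain `LE` instance of the statement. -/
abbrev partialOrder : PartialOrder Constraint where
  le := Constraint.le
  le_refl
    | .just _ => rfl
    | .noneOf _ => subset_rfl
  le_trans a b c hab hbc := by
    cases a with
    | just t => rwa [eq_just_of_just_le hab] at hbc
    | noneOf X =>
      cases b with
      | just s => rwa [eq_just_of_just_le hbc]
      | noneOf Y =>
        cases c with
        | just t => exact fun htX => (hbc : t ∉ Y) ((hab : X ⊆ Y) htX)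
        | noneOf Z => exact (hab : X ⊆ Y).trans hbc
  le_antisymm a b hab hba := by
    cases a with
    | just t => exact (eq_just_of_just_le hab).symm
    | noneOf X =>
      cases b with
      | just s => exact (hba : False).elim
      | noneOf Y => exact congrArg noneOf ((hab : X ⊆ Y).antisymm hba)

end Constraint

section

attribute [local instance] Constraint.partialOrder

theorem Constraint.isLUB_lub {C : Set Constraint} (hC : Compatible C) : IsLUB C (lub C) := by
  obtain ⟨y, hy⟩ := hC
  unfold lub
  split
  case isTrue hjust =>
    have hy_eq := eq_just_of_just_le (hy _ hjust.choose_spec)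
    exact ⟨fun x hx => hy_eq ▸ hy x hx, fun m hm => hm hjust.choose_spec⟩
  case isFalse hjust =>
    refine ⟨fun x hx => ?_, fun m hm => ?_⟩
    · cases x with
      | just t => exact absurd ⟨t, hx⟩ hjust
      | noneOf X => exact fun s hs => ⟨X, hx, hs⟩
    · cases m with
      | just t => exact fun ⟨X, hX, htX⟩ => (hm hX : t ∉ X) htX
      | noneOf Y => exact fun s ⟨X, hX, hsX⟩ => (hm hX : X ⊆ Y) hsX

theorem CDB.isLUB_lub {S : Set CDB} (hS : Compatible S) : IsLUB S (lub S) :=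
  isLUB_pi.2 fun a =>
    Constraint.isLUB_lub ((Function.monotone_eval a).map_bddAbove (hS : BddAbove S))

theorem cdbBot_le (Δ : CDB) : cdbBot ≤ Δ := fun _ => Constraint.noneOf_empty_le _

theorem unitCDB_le_iff {a : Attr} {c : Constraint} {Δ : CDB} : unitCDB a c ≤ Δ ↔ c ≤ Δ a := by
  refine ⟨fun h => by simpa [unitCDB] using h a, fun h b => ?_⟩
  unfold unitCDB
  split_ifs with hb
  · exact hb ▸ h
  · exact Constraint.noneOf_empty_le _

theorem satC_mono {σ : Subst} {F : List VAtom} {Δ Δ' : CDB} (h : Δ ≤ Δ') (hs : satC σ F Δ) :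
    satC σ F Δ' :=
  fun A hA => (hs A hA).trans (h _)

theorem IsChoiceSet.eq_of_le {𝒞 : Set CDB} (h𝒞 : IsChoiceSet 𝒞) {c c' Δ : CDB} (hc : c ∈ 𝒞)
    (hc' : c' ∈ 𝒞) (hcΔ : c ≤ Δ) (hc'Δ : c' ≤ Δ) : c = c' :=
  h𝒞 c hc c' hc' ⟨Δ, by simp [hcΔ, hc'Δ]⟩

theorem isChoiceSet_headChoice (σ : Subst) (H : Head) : IsChoiceSet (headChoice σ H) := by
  have bound : ∀ {a : Attr} {c c' : Constraint}, Compat (unitCDB a c) (unitCDB a c') →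
      ∃ y, c ≤ y ∧ c' ≤ y := fun ⟨Y, hY⟩ =>
    ⟨Y _, unitCDB_le_iff.1 (hY _ (Set.mem_insert _ _)),
      unitCDB_le_iff.1 (hY _ (Set.mem_insert_of_mem _ rfl))⟩
  cases H with
  | opn p args v =>
    have incompatible : ∀ {y}, Constraint.just (v.subst σ) ≤ y →
        ¬ Constraint.noneOf {v.subst σ} ≤ y := fun h h' => by
      rw [Constraint.eq_just_of_just_le h] at h'
      exact (h' : v.subst σ ∉ ({v.subst σ} : Set GTerm)) rfl
    rintro D (rfl | rfl) E (rfl | rfl) hDE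
    · rfl
    · obtain ⟨y, hy, hy'⟩ := bound hDE
      exact (incompatible hy hy').elim
    · obtain ⟨y, hy', hy⟩ := bound hDE
      exact (incompatible hy hy').elim
    · rfl
  | closed p args vs =>
    rintro D ⟨w, -, rfl⟩ E ⟨w', -, rfl⟩ hDE
    obtain ⟨y, hy, hy'⟩ := bound hDE
    rw [(Constraint.eq_just_of_just_le hy).symm.trans (Constraint.eq_just_of_just_le hy')]

theorem exists_le_of_mem_choiceSJoin {S : Set (Set CDB)} {E : CDB} (hE : E ∈ ChoiceSJoin S)
    {𝒞 : Set CDB} (h𝒞 : 𝒞 ∈ S) : ∃ c ∈ 𝒞, c ≤ E := by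
  obtain ⟨f, hf, hcompat, rfl⟩ := hE
  exact ⟨f ⟨𝒞, h𝒞⟩, hf ⟨𝒞, h𝒞⟩, (CDB.isLUB_lub hcompat).1 ⟨_, rfl⟩⟩

theorem le_of_mem_choiceSJoin {S : Set (Set CDB)} {E M : CDB} (hE : E ∈ ChoiceSJoin S)
    (h : ∀ 𝒞 ∈ S, ∀ c ∈ 𝒞, c ≤ E → c ≤ M) : E ≤ M := by
  obtain ⟨f, hf, hcompat, rfl⟩ := hE
  refine (CDB.isLUB_lub hcompat).2 ?_
  rintro _ ⟨i, rfl⟩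
  exact h _ i.2 _ (hf i) ((CDB.isLUB_lub hcompat).1 ⟨i, rfl⟩)

def IsModel (P : Program) (Δ : CDB) : Prop := TP P Δ = {Δ}

variable {P : Program}

theorem IsModel.exists_headChoice_le {M : CDB} (hM : IsModel P M) {r : Rule} (hr : r ∈ P)
    {σ : Subst} (hσ : satC σ r.prems M) : ∃ c ∈ headChoice σ r.head, c ≤ M := by
  have hmem : M ∈ TP P M := hM ▸ rfl
  exact exists_le_of_mem_choiceSJoin hmem (Set.mem_insert_of_mem _ ⟨r, hr, σ, hσ, rfl⟩)

theorem IsModel.le_of_mem_headChoice {M Δ : CDB} (hM : IsModel P M) (hMΔ : M ≤ Δ) {r : Rule}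
    (hr : r ∈ P) {σ : Subst} (hσ : satC σ r.prems M) {c : CDB}
    (hc : c ∈ headChoice σ r.head) (hcΔ : c ≤ Δ) : c ≤ M := by
  obtain ⟨c₀, hc₀, hc₀M⟩ := hM.exists_headChoice_le hr hσ
  rwa [(isChoiceSet_headChoice σ r.head).eq_of_le hc hc₀ hcΔ (hc₀M.trans hMΔ)]

theorem AlgStep.le {x y : CDB} (h : AlgStep P x y) : x ≤ y := by
  obtain ⟨-, a, hy⟩ := h
  obtain ⟨c, hc, hcy⟩ := exists_le_of_mem_choiceSJoin hy (Set.mem_insert _ _)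
  rwa [Set.mem_singleton_iff.1 hc] at hcy

theorem AlgStep.le_of_isModel {M Δ x y : CDB} (hM : IsModel P M) (hMΔ : M ≤ Δ)
    (h : AlgStep P x y) (hx : x ≤ M) (hy : y ≤ Δ) : y ≤ M := by
  obtain ⟨-, a, hstep⟩ := h
  refine le_of_mem_choiceSJoin hstep fun 𝒞 h𝒞 c hc hcy => ?_
  rcases h𝒞 with rfl | rfl
  · exact Set.mem_singleton_iff.1 hc ▸ hx
  · refine le_of_mem_choiceSJoin hc fun 𝒞' h𝒞' c' hc' hc'c => ?_
    obtain ⟨r, hr, σ, hσ, -, rfl⟩ := h𝒞'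
    exact hM.le_of_mem_headChoice hMΔ hr (satC_mono hx hσ) hc' (hc'c.trans (hcy.trans hy))

theorem le_of_reflTransGen_algStep {M Δ x y : CDB} (hM : IsModel P M) (hMΔ : M ≤ Δ)
    (hx : x ≤ M) (h : Relation.ReflTransGen (AlgStep P) x y) (hy : y ≤ Δ) : y ≤ M := by
  induction h with
  | refl => exact hx
  | tail _ hstep ih => exact hstep.le_of_isModel hM hMΔ (ih (hstep.le.trans hy)) hy

theorem eq_of_isModel_of_le {M Δ : CDB} (hseq : Relation.ReflTransGen (AlgStep P) cdbBot Δ)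
    (hM : IsModel P M) (hMΔ : M ≤ Δ) : M = Δ :=
  hMΔ.antisymm (le_of_reflTransGen_algStep hM hMΔ (cdbBot_le M) hseq le_rfl)

end

/-- Minimality of algorithmically reached models: a model reached by an algorithmic
step sequence from `⊥` is a minimal model. -/
theorem algorithm_reaches_minimal_models (P : Program) (hP : Program.WFP P) (Δ : CDB)
    (hseq : Relation.ReflTransGen (AlgStep P) cdbBot Δ) (hmodel : TP P Δ = {Δ}) :
    ∀ M : CDB, TP P M = {M} → M ≤ Δ → M = Δ :=
  fun _ hM hMΔ => eq_of_isModel_of_le hseq hM hMΔ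

end FCLP
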